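/- The 7×7 symmetric matrix M (the pairing matrix among the classes ψ₁², σ_{G₁}, …, σ_{G₆} from the genus-3 computation) given by 13824·M = [[31/70, 21/10, 7/10, 0, 0, 1, 0], [21/10, 13/10, -1/10, 0, 1, -1, 0], [7/10, -1/10, -11/10, 1, 0, -3, 0], [0, 0, 1, -7/10, -7/10, 2, -1], [0, 1, 0, -7/10, 0, 1, -1], [1, -1, -3, 2, 1, 0, 0], [0, 0, 0, -1, -1, 0, 0]] is invertible over ℚ. -/
import Mathlib


/-- The `7 × 7` symmetric pairing matrix among the codimension-2 classes
`ψ₁², σ_{G₁}, …, σ_{G₆}` on `M̄_{3,1}`: each entry is the corresponding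
intersection number, so `13824 • M` is the displayed rational matrix. -/
noncomputable def M15 : Matrix (Fin 7) (Fin 7) ℚ :=
  (13824 : ℚ)⁻¹ • !![31/70, 21/10, 7/10, 0, 0, 1, 0;
                     21/10, 13/10, -1/10, 0, 1, -1, 0;
                     7/10, -1/10, -11/10, 1, 0, -3, 0;
                     0, 0, 1, -7/10, -7/10, 2, -1;
                     0, 1, 0, -7/10, 0, 1, -1;
                     1, -1, -3, 2, 1, 0, 0;
                     0, 0, 0, -1, -1, 0, 0]

/-- Explicit inverse of `M15` (namely `13824 • M15⁻¹`, entrywise rational). -/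
noncomputable def M15inv : Matrix (Fin 7) (Fin 7) ℚ :=
  !![0, 5760, 0, 5760, -5760, 1728, 3456;
     5760, -10560/7, 8640/7, -24960/7, 24960/7, -1728/7, 5184/7;
     0, 8640/7, 8640/7, 34560/7, -34560/7, -3456, -39744/7;
     5760, -24960/7, 34560/7, 38400/7, -38400/7, 10368/7, -41472/7;
     -5760, 24960/7, -34560/7, -38400/7, 38400/7, -10368/7, -55296/7;
     1728, -1728/7, -3456, 10368/7, -10368/7, 76032/35, 31104/35;
     3456, 5184/7, -39744/7, -41472/7, -55296/7, 31104/35, 202176/35]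

theorem cv5 {α : Type*} (x : α) (u : Fin 6 → α) : Matrix.vecCons x u 5 = u 4 := rfl
theorem cv6 {α : Type*} (x : α) (u : Fin 6 → α) : Matrix.vecCons x u 6 = u 5 := rfl
theorem cv5' {α : Type*} (x : α) (u : Fin 5 → α) : Matrix.vecCons x u 5 = u 4 := rfl
theorem cv4' {α : Type*} (x : α) (u : Fin 4 → α) : Matrix.vecCons x u 4 = u 3 := rfl

set_option maxHeartbeats 4000000 in
/-- The pairing matrix `M15` is invertible over `ℚ`. -/
theorem M15_invertible : IsUnit M15 := by
  have h : M15 * M15inv = 1 := by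
    ext i j
    fin_cases i <;> fin_cases j <;>
      simp [M15, M15inv, Matrix.mul_apply, Fin.sum_univ_succ, Matrix.one_apply,
        cv5, cv6, cv5', cv4'] <;> norm_num
  exact ⟨⟨M15, M15inv, h, (mul_eq_one_comm).mp h⟩, rfl⟩
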